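/- arXiv:1201.1788 — 6 statements merged into one kernel-verified Lean document; each statement's English description precedes it below -/
import Mathlib

section
/- Let ρ : E → L̄⁰(G) be regular (ρ(X₁1_A + X₂1_{Aᶜ}) = ρ(X₁)1_A + ρ(X₂)1_{Aᶜ} for all A ∈ G), where E is an L⁰(G)-module of F-measurable random variables closed under countable concatenations. Then ρ is countably regular: for any sequence of pairwise disjoint sets A_i ∈ G and any X_i ∈ E, ρ(∑_{i=1}^∞ X_i 1_{A_i}) · 1_{A_j} = ρ(X_j) · 1_{A_j} for every j. -/
open MeasureTheory Filter Topology
open scoped Classical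

/-- A regular map `ρ : E → L̄⁰(G)` on an `L⁰(G)`-module `E` closed
under countable concatenations is countably regular: for pairwise disjoint `A_i ∈ G`
and `X_i ∈ E`, `ρ(∑ᵢ X_i 1_{A_i}) 1_{A_j} = ρ(X_j) 1_{A_j}` a.s. for every `j`. -/
theorem regular_implies_countably_regular
    {Ω : Type*} {mF : MeasurableSpace Ω} (m : MeasurableSpace Ω) (hm : m ≤ mF)
    (μ : Measure Ω) [IsProbabilityMeasure μ]
    (E : Set (Ω → ℝ)) (ρ : (Ω → ℝ) → Ω → EReal)
    -- `E` is closed under pasting along `G`-measurable sets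
    (hE : ∀ X₁ ∈ E, ∀ X₂ ∈ E, ∀ A : Set Ω, MeasurableSet[m] A →
      (fun ω => if ω ∈ A then X₁ ω else X₂ ω) ∈ E)
    -- regularity of `ρ`
    (hreg : ∀ X₁ ∈ E, ∀ X₂ ∈ E, ∀ A : Set Ω, MeasurableSet[m] A →
      ρ (fun ω => if ω ∈ A then X₁ ω else X₂ ω)
        =ᵐ[μ] fun ω => if ω ∈ A then ρ X₁ ω else ρ X₂ ω)
    (A : ℕ → Set Ω) (hAmeas : ∀ i, MeasurableSet[m] (A i))
    (hAdisj : Pairwise (Function.onFun Disjoint A))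
    (X : ℕ → Ω → ℝ) (hX : ∀ i, X i ∈ E)
    (hSE : (fun ω => ∑' i, (A i).indicator (X i) ω) ∈ E) :
    ∀ j, ∀ᵐ ω ∂μ, ω ∈ A j →
      ρ (fun ω => ∑' i, (A i).indicator (X i) ω) ω = ρ (X j) ω := by
  intro j
  set S : Ω → ℝ := fun ω => ∑' i, (A i).indicator (X i) ω with hS
  have hpaste : (fun ω => if ω ∈ A j then X j ω else S ω) = S := by
    funext ω
    by_cases h : ω ∈ A j
    · simp only [h, if_true, hS]
      have : ∑' i, (A i).indicator (X i) ω = (A j).indicator (X j) ω := by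
        apply tsum_eq_single
        intro i hi
        have : ω ∉ A i := fun hA => (hAdisj hi).le_bot ⟨hA, h⟩
        simp [Set.indicator_of_notMem this]
      rw [this, Set.indicator_of_mem h]
    · simp [h]
  have := hreg (X j) (hX j) S hSE (A j) (hAmeas j)
  rw [hpaste] at this
  filter_upwards [this] with ω hω hmem
  rw [hω, if_pos hmem]
end

section
/- Let ρ : E → L̄⁰(G) be regular, μ : E → L⁰(G) L⁰(G)-linear, and R(Y,μ) := ess inf { ρ(ξ) : μ(ξ) ≥ Y }. If R(Y,μ) < α on some set of positive probability for α ∈ L⁰(G), then there exists a single ξ ∈ E with μ(ξ) ≥ Y and ρ(ξ) < α a.s. on that set. (Attainability of strict bounds from downward directedness and countable concatenation.) -/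
open MeasureTheory Filter Topology
open scoped Classical

/-- Essential infimum of a family of extended-real random variables. -/
def IsEssInf {Ω : Type*} [MeasurableSpace Ω] (μ : MeasureTheory.Measure Ω)
    (S : Set (Ω → EReal)) (g : Ω → EReal) : Prop :=
  (∀ f ∈ S, ∀ᵐ ω ∂μ, g ω ≤ f ω) ∧
  ∀ h : Ω → EReal, (∀ f ∈ S, ∀ᵐ ω ∂μ, h ω ≤ f ω) → ∀ᵐ ω ∂μ, h ω ≤ g ω

/-!
The sublevel sets `{ρ ξ < α}` of the feasible positions `ξ` (those with `ν ξ ≥ Y`) are closed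
under countable unions up to null sets, because feasible positions can be concatenated along a
measurable partition and `ρ`, `ν` are local. Maximizing the measure therefore yields a feasible
`ξ₀` whose sublevel set is a.e. maximal. Off that set every feasible `ρ ξ` is a.e. `≥ α`, so `α`
is there an a.e. lower bound of the family, hence below its essential infimum `g`; since `g < α`
a.e. on `A`, the set `{ρ ξ₀ < α}` must cover `A` a.e.
-/

namespace MeasureTheory

variable {Ω : Type*} [MeasurableSpace Ω] {μ : Measure Ω}

def HasCountableConcatenation {β : Type*} (μ : Measure Ω) (F : Set (Ω → β)) : Prop :=
  ∀ f : ℕ → Ω → β, (∀ n, f n ∈ F) → ∀ B : ℕ → Set Ω, (∀ n, MeasurableSet (B n)) →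
    Pairwise (Function.onFun Disjoint B) → ⋃ n, B n = Set.univ →
    ∃ f' ∈ F, ∀ n, ∀ᵐ ω ∂μ, ω ∈ B n → f' ω = f n ω

theorem exists_ae_greatest_of_forall_seq [IsFiniteMeasure μ] {ι : Type*} {p : Set ι}
    {s : ι → Set Ω} (hs : ∀ i ∈ p, MeasurableSet (s i)) (hp : p.Nonempty)
    (hseq : ∀ x : ℕ → ι, (∀ n, x n ∈ p) → ∃ i ∈ p, ∀ n, s (x n) ≤ᵐ[μ] s i) :
    ∃ i ∈ p, ∀ j ∈ p, s j ≤ᵐ[μ] s i := by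
  set c := sSup ((fun i => μ (s i)) '' p)
  have hle_c : ∀ j ∈ p, μ (s j) ≤ c := fun j hj => le_sSup ⟨j, hj, rfl⟩
  obtain ⟨u, -, hu, hup⟩ :=
    exists_seq_tendsto_sSup (hp.image fun i => μ (s i)) (OrderTop.bddAbove _)
  choose x hxp hxu using hup
  obtain ⟨i, hip, hxi⟩ := hseq x hxp
  have hc_le : c ≤ μ (s i) :=
    le_of_tendsto' hu fun n => by rw [← hxu n]; exact measure_mono_ae (hxi n)
  refine ⟨i, hip, fun j hj => ?_⟩
  obtain ⟨k, hkp, hjik⟩ := hseq (fun n => if n = 0 then j else i) fun n => by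
    split_ifs <;> assumption
  have hik : s i =ᵐ[μ] s k := ae_eq_of_ae_subset_of_measure_ge (by simpa using hjik 1)
    ((hle_c k hkp).trans hc_le) (hs i hip).nullMeasurableSet (measure_ne_top _ _)
  exact (by simpa using hjik 0 : s j ≤ᵐ[μ] s k).trans_eq hik.symm

omit [MeasurableSpace Ω] in
theorem iUnion_disjointed_union_compl_iUnion (D : ℕ → Set Ω) :
    ⋃ n, disjointed (fun n => D n ∪ (⋃ k, D k)ᶜ) n = Set.univ := by
  rw [iUnion_disjointed, Set.eq_univ_iff_forall]
  intro ω
  by_cases hω : ω ∈ ⋃ k, D k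
  · obtain ⟨k, hk⟩ := Set.mem_iUnion.mp hω
    exact Set.mem_iUnion.mpr ⟨k, Or.inl hk⟩
  · exact Set.mem_iUnion.mpr ⟨0, Or.inr hω⟩

theorem HasCountableConcatenation.exists_setOf_lt_ae_le {β : Type*} [LT β] {F : Set (Ω → β)}
    (hF : HasCountableConcatenation μ F) {α : Ω → β}
    (hFα : ∀ f ∈ F, MeasurableSet {ω | f ω < α ω}) {f : ℕ → Ω → β} (hf : ∀ n, f n ∈ F) :
    ∃ f' ∈ F, ∀ n, {ω | f n ω < α ω} ≤ᵐ[μ] {ω | f' ω < α ω} := by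
  set D := fun n => {ω | f n ω < α ω}
  set B := disjointed fun n => D n ∪ (⋃ k, D k)ᶜ
  have hD : ∀ n, MeasurableSet (D n) := fun n => hFα _ (hf n)
  obtain ⟨f', hf'F, hf'⟩ := hF f hf B
    (MeasurableSet.disjointed fun n => (hD n).union (MeasurableSet.iUnion hD).compl)
    (disjoint_disjointed _) (iUnion_disjointed_union_compl_iUnion D)
  refine ⟨f', hf'F, fun n => ?_⟩
  filter_upwards [ae_all_iff.mpr hf'] with ω hω (hωn : ω ∈ D n)
  obtain ⟨k, hk⟩ := Set.mem_iUnion.mp ((iUnion_disjointed_union_compl_iUnion D).symm ▸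
    Set.mem_univ ω)
  have hωk : ω ∈ D k := (disjointed_subset _ k hk).resolve_right
    (not_not.mpr (Set.mem_iUnion.mpr ⟨n, hωn⟩))
  show f' ω < α ω
  rw [hω k hk]
  exact hωk

theorem IsEssInf.exists_ae_lt [IsFiniteMeasure μ] {F : Set (Ω → EReal)} {g α : Ω → EReal}
    (hg : IsEssInf μ F g) (hF : HasCountableConcatenation μ F) (hFmeas : ∀ f ∈ F, Measurable f)
    (hα : Measurable α) {A : Set Ω} (hA : μ A ≠ 0) (hlt : ∀ᵐ ω ∂μ, ω ∈ A → g ω < α ω) :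
    ∃ f ∈ F, ∀ᵐ ω ∂μ, ω ∈ A → f ω < α ω := by
  have hFα : ∀ f ∈ F, MeasurableSet {ω | f ω < α ω} :=
    fun f hf => measurableSet_lt (hFmeas f hf) hα
  have hF_nonempty : F.Nonempty := by
    refine Set.nonempty_iff_ne_empty.mpr fun hF_empty => hA ?_
    rw [measure_eq_zero_iff_ae_notMem]
    filter_upwards [hg.2 α (by simp [hF_empty]), hlt] with ω hαg hgα hωA
    exact (hgα hωA).not_ge hαg
  obtain ⟨f₀, hf₀, hmax⟩ := exists_ae_greatest_of_forall_seq hFα hF_nonempty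
    fun f hf => hF.exists_setOf_lt_ae_le hFα hf
  set h : Ω → EReal := fun ω => if f₀ ω < α ω then g ω else α ω
  have h_lower : ∀ f ∈ F, ∀ᵐ ω ∂μ, h ω ≤ f ω := by
    intro f hf
    filter_upwards [hg.1 f hf, hmax f hf] with ω hgf hsub
    by_cases h₀ : f₀ ω < α ω
    · simpa [h, h₀] using hgf
    · simp only [h, if_neg h₀]
      exact not_lt.mp fun hfα => h₀ (hsub hfα)
  refine ⟨f₀, hf₀, ?_⟩
  filter_upwards [hg.2 h h_lower, hlt] with ω hhg hgα hωA
  by_contra h₀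
  simp only [h, if_neg h₀] at hhg
  exact (hgα hωA).not_ge hhg

def IsRegular {γ β : Type*} (μ : Measure Ω) (E : Set (Ω → γ)) (F : (Ω → γ) → Ω → β) : Prop :=
  ∀ X₁ ∈ E, ∀ X₂ ∈ E, ∀ A : Set Ω, MeasurableSet A →
    F (fun ω => if ω ∈ A then X₁ ω else X₂ ω) =ᵐ[μ] fun ω => if ω ∈ A then F X₁ ω else F X₂ ω

theorem IsRegular.ae_eq_of_eqOn {γ β : Type*} {E : Set (Ω → γ)} {F : (Ω → γ) → Ω → β}
    (hF : IsRegular μ E F) {X X' : Ω → γ} (hX : X ∈ E) (hX' : X' ∈ E) {C : Set Ω}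
    (hC : MeasurableSet C) (hXX' : Set.EqOn X X' C) : ∀ᵐ ω ∂μ, ω ∈ C → F X ω = F X' ω := by
  have hpaste : (fun ω => if ω ∈ C then X ω else X' ω) = X' := by
    funext ω
    split_ifs with hω
    · exact hXX' hω
    · rfl
  filter_upwards [hpaste ▸ hF X hX X' hX' C hC] with ω hω hωC
  rw [hω, if_pos hωC]

theorem isRegular_of_linear {E : Set (Ω → ℝ)} {ν : (Ω → ℝ) → Ω → ℝ}
    (hlin : ∀ α β : Ω → ℝ, Measurable α → Measurable β → ∀ X ∈ E, ∀ Y ∈ E,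
      ν (fun ω => α ω * X ω + β ω * Y ω) =ᵐ[μ] fun ω => α ω * ν X ω + β ω * ν Y ω) :
    IsRegular μ E ν := by
  intro X₁ hX₁ X₂ hX₂ A hA
  have hpaste : ∀ Z₁ Z₂ : Ω → ℝ, (fun ω => if ω ∈ A then Z₁ ω else Z₂ ω) =
      fun ω => A.indicator 1 ω * Z₁ ω + Aᶜ.indicator 1 ω * Z₂ ω := by
    intro Z₁ Z₂
    funext ω
    by_cases hω : ω ∈ A <;> simp [hω]
  rw [hpaste, hpaste]
  exact (hlin _ _ (measurable_const.indicator hA) (measurable_const.indicator hA.compl)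
    X₁ hX₁ X₂ hX₂)

omit [MeasurableSpace Ω] in
theorem eqOn_tsum_indicator {B : ℕ → Set Ω} (hB : Pairwise (Function.onFun Disjoint B))
    (X : ℕ → Ω → ℝ) (n : ℕ) : Set.EqOn (fun ω => ∑' k, (B k).indicator (X k) ω) (X n) (B n) := by
  intro ω hω
  show ∑' k, (B k).indicator (X k) ω = X n ω
  rw [tsum_eq_single n fun k hk =>
    Set.indicator_of_notMem (Set.disjoint_left.mp (hB hk) · hω) _, Set.indicator_of_mem hω]

theorem hasCountableConcatenation_of_isRegular {β : Type*} {E : Set (Ω → ℝ)}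
    {ρ : (Ω → ℝ) → Ω → β} {ν : (Ω → ℝ) → Ω → ℝ}
    (hEcc : ∀ (A : ℕ → Set Ω), (∀ n, MeasurableSet (A n)) →
      Pairwise (Function.onFun Disjoint A) → (⋃ n, A n) = Set.univ →
      ∀ X : ℕ → Ω → ℝ, (∀ n, X n ∈ E) → (fun ω => ∑' n, (A n).indicator (X n) ω) ∈ E)
    (hρ : IsRegular μ E ρ) (hν : IsRegular μ E ν) (Y : Ω → ℝ) :
    HasCountableConcatenation μ {f | ∃ ξ ∈ E, (∀ᵐ ω ∂μ, Y ω ≤ ν ξ ω) ∧ f = ρ ξ} := by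
  intro f hf B hB hBdisj hBunion
  choose ξ hξE hξY hξf using hf
  set ξ' := fun ω => ∑' n, (B n).indicator (ξ n) ω
  have hξ'E : ξ' ∈ E := hEcc B hB hBdisj hBunion ξ hξE
  have hξ'ξ := eqOn_tsum_indicator hBdisj ξ
  have hν' : ∀ᵐ ω ∂μ, Y ω ≤ ν ξ' ω := by
    filter_upwards [ae_all_iff.mpr fun n => hν.ae_eq_of_eqOn hξ'E (hξE n) (hB n) (hξ'ξ n),
      ae_all_iff.mpr hξY] with ω hνω hYω
    obtain ⟨n, hn⟩ := Set.mem_iUnion.mp (hBunion.symm ▸ Set.mem_univ ω)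
    rw [hνω n hn]
    exact hYω n
  refine ⟨ρ ξ', ⟨ξ', hξ'E, hν', rfl⟩, fun n => ?_⟩
  rw [hξf n]
  exact hρ.ae_eq_of_eqOn hξ'E (hξE n) (hB n) (hξ'ξ n)

end MeasureTheory

theorem dual_R_attainability_general
    {Ω : Type*} (m : MeasurableSpace Ω)
    (μ : Measure Ω) [IsProbabilityMeasure μ]
    (E : Set (Ω → ℝ)) (ρ : (Ω → ℝ) → Ω → EReal) (ν : (Ω → ℝ) → Ω → ℝ)
    (hρmeas : ∀ ξ ∈ E, Measurable[m] (ρ ξ))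
    -- `E` is closed under countable concatenations along `G`-measurable partitions
    (hEcc : ∀ (A : ℕ → Set Ω), (∀ n, MeasurableSet[m] (A n)) →
      Pairwise (Function.onFun Disjoint A) → (⋃ n, A n) = Set.univ →
      ∀ X : ℕ → Ω → ℝ, (∀ n, X n ∈ E) →
      (fun ω => ∑' n, (A n).indicator (X n) ω) ∈ E)
    -- `E` is closed under pasting and `ρ` is regular
    (hreg : ∀ X₁ ∈ E, ∀ X₂ ∈ E, ∀ A : Set Ω, MeasurableSet[m] A →
      (fun ω => if ω ∈ A then X₁ ω else X₂ ω) ∈ E ∧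
      ρ (fun ω => if ω ∈ A then X₁ ω else X₂ ω)
        =ᵐ[μ] fun ω => if ω ∈ A then ρ X₁ ω else ρ X₂ ω)
    -- `L⁰(G)`-linearity of `ν`
    (hlin : ∀ α β : Ω → ℝ, Measurable[m] α → Measurable[m] β →
      ∀ X ∈ E, ∀ Y ∈ E,
      (fun ω => α ω * X ω + β ω * Y ω) ∈ E ∧
      ν (fun ω => α ω * X ω + β ω * Y ω)
        =ᵐ[μ] fun ω => α ω * ν X ω + β ω * ν Y ω)
    (Y : Ω → ℝ)
    (g : Ω → EReal)
    (hg : IsEssInf μ {f | ∃ ξ ∈ E, (∀ᵐ ω ∂μ, Y ω ≤ ν ξ ω) ∧ f = ρ ξ} g)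
    (α : Ω → ℝ) (hα : Measurable[m] α)
    (A : Set Ω) (hApos : 0 < μ A)
    (hlt : ∀ᵐ ω ∂μ, ω ∈ A → g ω < (α ω : EReal)) :
    ∃ ξ ∈ E, (∀ᵐ ω ∂μ, Y ω ≤ ν ξ ω) ∧
      ∀ᵐ ω ∂μ, ω ∈ A → ρ ξ ω < (α ω : EReal) := by
  have hρ : IsRegular μ E ρ := fun X₁ hX₁ X₂ hX₂ A hA => (hreg X₁ hX₁ X₂ hX₂ A hA).2
  have hν : IsRegular μ E ν :=
    isRegular_of_linear fun a b ha hb X hX Z hZ => (hlin a b ha hb X hX Z hZ).2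
  have hconcat := hasCountableConcatenation_of_isRegular hEcc hρ hν Y
  obtain ⟨-, ⟨ξ, hξE, hξY, rfl⟩, hξα⟩ := hg.exists_ae_lt hconcat
    (by rintro - ⟨ξ, hξ, -, rfl⟩; exact hρmeas ξ hξ) (measurable_coe_real_ereal.comp hα)
    hApos.ne' hlt
  exact ⟨ξ, hξE, hξY, hξα⟩

/-- For regular `ρ : E → L̄⁰(G)` and `L⁰(G)`-linear `ν`, with
`R(Y,ν) = ess inf {ρ(ξ) : ν(ξ) ≥ Y}`: if `R(Y,ν) < α` on a set `A` of positive
probability (`α ∈ L⁰(G)`), then there exists a single `ξ ∈ E` with `ν(ξ) ≥ Y`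
and `ρ(ξ) < α` a.s. on `A`. -/
theorem dual_R_attainability
    {Ω : Type*} {mF : MeasurableSpace Ω} (m : MeasurableSpace Ω) (hm : m ≤ mF)
    (μ : Measure Ω) [IsProbabilityMeasure μ]
    (E : Set (Ω → ℝ)) (ρ : (Ω → ℝ) → Ω → EReal) (ν : (Ω → ℝ) → Ω → ℝ)
    (hρmeas : ∀ ξ ∈ E, Measurable[m] (ρ ξ)) (hνmeas : ∀ ξ ∈ E, Measurable[m] (ν ξ))
    -- `E` is closed under countable concatenations along `G`-measurable partitions
    (hEcc : ∀ (A : ℕ → Set Ω), (∀ n, MeasurableSet[m] (A n)) →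
      Pairwise (Function.onFun Disjoint A) → (⋃ n, A n) = Set.univ →
      ∀ X : ℕ → Ω → ℝ, (∀ n, X n ∈ E) →
      (fun ω => ∑' n, (A n).indicator (X n) ω) ∈ E)
    -- `E` is closed under pasting and `ρ` is regular
    (hreg : ∀ X₁ ∈ E, ∀ X₂ ∈ E, ∀ A : Set Ω, MeasurableSet[m] A →
      (fun ω => if ω ∈ A then X₁ ω else X₂ ω) ∈ E ∧
      ρ (fun ω => if ω ∈ A then X₁ ω else X₂ ω)
        =ᵐ[μ] fun ω => if ω ∈ A then ρ X₁ ω else ρ X₂ ω)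
    -- `L⁰(G)`-linearity of `ν`
    (hlin : ∀ α β : Ω → ℝ, Measurable[m] α → Measurable[m] β →
      ∀ X ∈ E, ∀ Y ∈ E,
      (fun ω => α ω * X ω + β ω * Y ω) ∈ E ∧
      ν (fun ω => α ω * X ω + β ω * Y ω)
        =ᵐ[μ] fun ω => α ω * ν X ω + β ω * ν Y ω)
    (Y : Ω → ℝ) (hY : Measurable[m] Y)
    (g : Ω → EReal)
    (hg : IsEssInf μ {f | ∃ ξ ∈ E, (∀ᵐ ω ∂μ, Y ω ≤ ν ξ ω) ∧ f = ρ ξ} g)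
    (α : Ω → ℝ) (hα : Measurable[m] α)
    (A : Set Ω) (hA : MeasurableSet[m] A) (hApos : 0 < μ A)
    (hlt : ∀ᵐ ω ∂μ, ω ∈ A → g ω < (α ω : EReal)) :
    ∃ ξ ∈ E, (∀ᵐ ω ∂μ, Y ω ≤ ν ξ ω) ∧
      ∀ᵐ ω ∂μ, ω ∈ A → ρ ξ ω < (α ω : EReal) :=
  dual_R_attainability_general m μ E ρ ν hρmeas hEcc hreg hlin Y g hg α hα A hApos hlt
end

section
/- Let ρ : E → L̄⁰(G) be regular and μ L⁰(G)-linear, R(Y,μ) := ess inf { ρ(ξ) : μ(ξ) ≥ Y }. Then for every A ∈ G and every Y in the effective domain, R(Y,μ)·1_A = R(Y·1_A, μ)·1_A. -/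
open MeasureTheory Filter Topology
open scoped Classical

/-- For regular `ρ : E → L̄⁰(G)` and `L⁰(G)`-linear `ν`, with
`R(Y,ν) = ess inf {ρ(ξ) : ν(ξ) ≥ Y}`: for every `A ∈ G` and every `Y` in the
effective domain, `R(Y,ν)·1_A = R(Y·1_A,ν)·1_A` a.s. -/
theorem dual_R_localization
    {Ω : Type*} {mF : MeasurableSpace Ω} (m : MeasurableSpace Ω) (hm : m ≤ mF)
    (μ : Measure Ω) [IsProbabilityMeasure μ]
    (E : Set (Ω → ℝ)) (ρ : (Ω → ℝ) → Ω → EReal) (ν : (Ω → ℝ) → Ω → ℝ)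
    (hρmeas : ∀ ξ ∈ E, Measurable[m] (ρ ξ)) (hνmeas : ∀ ξ ∈ E, Measurable[m] (ν ξ))
    (hreg : ∀ X₁ ∈ E, ∀ X₂ ∈ E, ∀ A : Set Ω, MeasurableSet[m] A →
      (fun ω => if ω ∈ A then X₁ ω else X₂ ω) ∈ E ∧
      ρ (fun ω => if ω ∈ A then X₁ ω else X₂ ω)
        =ᵐ[μ] fun ω => if ω ∈ A then ρ X₁ ω else ρ X₂ ω)
    (hlin : ∀ α β : Ω → ℝ, Measurable[m] α → Measurable[m] β →
      ∀ X ∈ E, ∀ Y ∈ E,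
      (fun ω => α ω * X ω + β ω * Y ω) ∈ E ∧
      ν (fun ω => α ω * X ω + β ω * Y ω)
        =ᵐ[μ] fun ω => α ω * ν X ω + β ω * ν Y ω)
    (Y : Ω → ℝ) (hY : Measurable[m] Y)
    -- `Y` belongs to the effective domain
    (hdom : ∃ ξ ∈ E, ∀ᵐ ω ∂μ, Y ω ≤ ν ξ ω)
    (A : Set Ω) (hA : MeasurableSet[m] A)
    (g g' : Ω → EReal)
    (hg : IsEssInf μ {f | ∃ ξ ∈ E, (∀ᵐ ω ∂μ, Y ω ≤ ν ξ ω) ∧ f = ρ ξ} g)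
    (hg' : IsEssInf μ
      {f | ∃ ξ ∈ E, (∀ᵐ ω ∂μ, A.indicator Y ω ≤ ν ξ ω) ∧ f = ρ ξ} g') :
    ∀ᵐ ω ∂μ, ω ∈ A → g ω = g' ω := by
  set α : Ω → ℝ := fun ω => if ω ∈ A then 1 else 0 with hα
  set β : Ω → ℝ := fun ω => if ω ∈ A then 0 else 1 with hβ
  have hαm : Measurable[m] α := Measurable.ite hA measurable_const measurable_const
  have hβm : Measurable[m] β := Measurable.ite hA measurable_const measurable_const
  obtain ⟨ξ₀, hξ₀E, hν₀⟩ := hdom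
  -- Step 1 : on A, g' ≤ g
  have step1 : ∀ᵐ ω ∂μ, (if ω ∈ A then g' ω else ⊥) ≤ g ω := by
    refine hg.2 _ ?_
    rintro f ⟨ξ, hξE, hν, rfl⟩
    -- the "zero" element of E
    obtain ⟨hζE, hνζ⟩ := hlin 0 0 measurable_const measurable_const ξ hξE ξ hξE
    set ζ : Ω → ℝ := fun ω => (0 : Ω → ℝ) ω * ξ ω + (0 : Ω → ℝ) ω * ξ ω with hζ
    obtain ⟨hpE, hρp⟩ := hreg ξ hξE ζ hζE A hA
    set p : Ω → ℝ := fun ω => if ω ∈ A then ξ ω else ζ ω with hp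
    have hpe : p = fun ω => α ω * ξ ω + β ω * ζ ω := by
      funext ω
      by_cases h : ω ∈ A <;> simp [hp, hα, hβ, hζ, h]
    have hνp : ν p =ᵐ[μ] fun ω => α ω * ν ξ ω + β ω * ν ζ ω := by
      rw [hpe]
      exact (hlin α β hαm hβm ξ hξE ζ hζE).2
    have hpE' : p ∈ E := by rw [hpe]; exact (hlin α β hαm hβm ξ hξE ζ hζE).1
    have hfeas : ∀ᵐ ω ∂μ, A.indicator Y ω ≤ ν p ω := by
      filter_upwards [hν, hνp, hνζ] with ω h1 h2 h3
      by_cases h : ω ∈ A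
      · simpa [Set.indicator, h, hα, hβ, h2] using h1
      · simp [Set.indicator, h, hα, hβ, h2, h3]
    have hle : ∀ᵐ ω ∂μ, g' ω ≤ ρ p ω := hg'.1 (ρ p) ⟨p, hpE', hfeas, rfl⟩
    filter_upwards [hle, hρp] with ω h1 h2
    by_cases h : ω ∈ A
    · simp only [h, if_true]
      calc g' ω ≤ ρ p ω := h1
        _ = ρ ξ ω := by simpa [h] using h2
    · simp [h]
  -- Step 2 : on A, g ≤ g'
  have step2 : ∀ᵐ ω ∂μ, (if ω ∈ A then g ω else ⊥) ≤ g' ω := by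
    refine hg'.2 _ ?_
    rintro f ⟨ξ, hξE, hν, rfl⟩
    obtain ⟨hqE, hρq⟩ := hreg ξ hξE ξ₀ hξ₀E A hA
    set q : Ω → ℝ := fun ω => if ω ∈ A then ξ ω else ξ₀ ω with hq
    have hqe : q = fun ω => α ω * ξ ω + β ω * ξ₀ ω := by
      funext ω
      by_cases h : ω ∈ A <;> simp [hq, hα, hβ, h]
    have hνq : ν q =ᵐ[μ] fun ω => α ω * ν ξ ω + β ω * ν ξ₀ ω := by
      rw [hqe]
      exact (hlin α β hαm hβm ξ hξE ξ₀ hξ₀E).2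
    have hqE' : q ∈ E := by rw [hqe]; exact (hlin α β hαm hβm ξ hξE ξ₀ hξ₀E).1
    have hfeas : ∀ᵐ ω ∂μ, Y ω ≤ ν q ω := by
      filter_upwards [hν, hν₀, hνq] with ω h1 h2 h3
      by_cases h : ω ∈ A
      · simpa [Set.indicator, h, hα, hβ, h3] using h1
      · simpa [hα, hβ, h, h3] using h2
    have hle : ∀ᵐ ω ∂μ, g ω ≤ ρ q ω := hg.1 (ρ q) ⟨q, hqE', hfeas, rfl⟩
    filter_upwards [hle, hρq] with ω h1 h2
    by_cases h : ω ∈ A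
    · simp only [h, if_true]
      calc g ω ≤ ρ q ω := h1
        _ = ρ ξ ω := by simpa [h] using h2
    · simp [h]
  filter_upwards [step1, step2] with ω h1 h2 hω
  simp only [hω, if_true] at h1 h2
  exact le_antisymm h2 h1
end

section
/- Let ρ : E → L̄⁰(G) be regular and μ L⁰(G)-linear, R(Y,μ) := ess inf { ρ(ξ) : μ(ξ) ≥ Y }. Then for all X₁, X₂ ∈ E: R(μ(X₁),μ) ∧ R(μ(X₂),μ) = R(μ(X₁) ∧ μ(X₂), μ) and R(μ(X₁),μ) ∨ R(μ(X₂),μ) = R(μ(X₁) ∨ μ(X₂), μ). -/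
open MeasureTheory Filter Topology
open scoped Classical

/-- For regular `ρ : E → L̄⁰(G)`, `L⁰(G)`-linear `ν` and
`R(Y,ν) = ess inf {ρ(ξ) : ν(ξ) ≥ Y}`, for all `X₁, X₂ ∈ E`:
`R(ν(X₁),ν) ∧ R(ν(X₂),ν) = R(ν(X₁) ∧ ν(X₂), ν)` and
`R(ν(X₁),ν) ∨ R(ν(X₂),ν) = R(ν(X₁) ∨ ν(X₂), ν)` a.s. -/
theorem dual_R_lattice_identities
    {Ω : Type*} {mF : MeasurableSpace Ω} (m : MeasurableSpace Ω) (hm : m ≤ mF)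
    (μ : Measure Ω) [IsProbabilityMeasure μ]
    (E : Set (Ω → ℝ)) (ρ : (Ω → ℝ) → Ω → EReal) (ν : (Ω → ℝ) → Ω → ℝ)
    (hρmeas : ∀ ξ ∈ E, Measurable[m] (ρ ξ)) (hνmeas : ∀ ξ ∈ E, Measurable[m] (ν ξ))
    (hreg : ∀ X₁ ∈ E, ∀ X₂ ∈ E, ∀ A : Set Ω, MeasurableSet[m] A →
      (fun ω => if ω ∈ A then X₁ ω else X₂ ω) ∈ E ∧
      ρ (fun ω => if ω ∈ A then X₁ ω else X₂ ω)
        =ᵐ[μ] fun ω => if ω ∈ A then ρ X₁ ω else ρ X₂ ω)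
    (hlin : ∀ α β : Ω → ℝ, Measurable[m] α → Measurable[m] β →
      ∀ X ∈ E, ∀ Y ∈ E,
      (fun ω => α ω * X ω + β ω * Y ω) ∈ E ∧
      ν (fun ω => α ω * X ω + β ω * Y ω)
        =ᵐ[μ] fun ω => α ω * ν X ω + β ω * ν Y ω)
    (X₁ : Ω → ℝ) (hX₁ : X₁ ∈ E) (X₂ : Ω → ℝ) (hX₂ : X₂ ∈ E)
    (g₁ g₂ gmin gmax : Ω → EReal)
    (hg₁ : IsEssInf μ {f | ∃ ξ ∈ E, (∀ᵐ ω ∂μ, ν X₁ ω ≤ ν ξ ω) ∧ f = ρ ξ} g₁)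
    (hg₂ : IsEssInf μ {f | ∃ ξ ∈ E, (∀ᵐ ω ∂μ, ν X₂ ω ≤ ν ξ ω) ∧ f = ρ ξ} g₂)
    (hgmin : IsEssInf μ
      {f | ∃ ξ ∈ E, (∀ᵐ ω ∂μ, min (ν X₁ ω) (ν X₂ ω) ≤ ν ξ ω) ∧ f = ρ ξ} gmin)
    (hgmax : IsEssInf μ
      {f | ∃ ξ ∈ E, (∀ᵐ ω ∂μ, max (ν X₁ ω) (ν X₂ ω) ≤ ν ξ ω) ∧ f = ρ ξ} gmax) :
    (∀ᵐ ω ∂μ, min (g₁ ω) (g₂ ω) = gmin ω) ∧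
    (∀ᵐ ω ∂μ, max (g₁ ω) (g₂ ω) = gmax ω) := by
  set B : Set Ω := {ω | ν X₁ ω ≤ ν X₂ ω} with hBdef
  have hB : MeasurableSet[m] B :=
    measurableSet_le (hνmeas X₁ hX₁) (hνmeas X₂ hX₂)
  -- pasting lemma
  have paste : ∀ ξ ∈ E, ∀ ζ ∈ E,
      ∃ η ∈ E, (ρ η =ᵐ[μ] fun ω => if ω ∈ B then ρ ξ ω else ρ ζ ω) ∧
        (ν η =ᵐ[μ] fun ω => if ω ∈ B then ν ξ ω else ν ζ ω) := by
    intro ξ hξ ζ hζ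
    obtain ⟨hηE, hρη⟩ := hreg ξ hξ ζ hζ B hB
    refine ⟨_, hηE, hρη, ?_⟩
    have hα : Measurable[m] (fun ω => if ω ∈ B then (1:ℝ) else 0) :=
      Measurable.ite hB measurable_const measurable_const
    have hβ : Measurable[m] (fun ω => if ω ∈ B then (0:ℝ) else 1) :=
      Measurable.ite hB measurable_const measurable_const
    obtain ⟨-, hν⟩ := hlin _ _ hα hβ ξ hξ ζ hζ
    have heq : (fun ω => (if ω ∈ B then (1:ℝ) else 0) * ξ ω
        + (if ω ∈ B then (0:ℝ) else 1) * ζ ω)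
        = (fun ω => if ω ∈ B then ξ ω else ζ ω) := by
      funext ω; by_cases h : ω ∈ B <;> simp [h]
    rw [heq] at hν
    refine hν.trans (Filter.Eventually.of_forall fun ω => ?_)
    by_cases h : ω ∈ B <;> simp [h]
  constructor
  · -- min identity
    have h1 : ∀ᵐ ω ∂μ, gmin ω ≤ g₁ ω := by
      refine hg₁.2 gmin ?_
      rintro f ⟨ξ, hξ, hle, rfl⟩
      exact hgmin.1 (ρ ξ) ⟨ξ, hξ, hle.mono fun ω h => le_trans (min_le_left _ _) h, rfl⟩
    have h2 : ∀ᵐ ω ∂μ, gmin ω ≤ g₂ ω := by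
      refine hg₂.2 gmin ?_
      rintro f ⟨ξ, hξ, hle, rfl⟩
      exact hgmin.1 (ρ ξ) ⟨ξ, hξ, hle.mono fun ω h => le_trans (min_le_right _ _) h, rfl⟩
    have h3 : ∀ᵐ ω ∂μ, min (g₁ ω) (g₂ ω) ≤ gmin ω := by
      refine hgmin.2 _ ?_
      rintro f ⟨ξ, hξ, hle, rfl⟩
      obtain ⟨η₁, hη₁E, hρη₁, hνη₁⟩ := paste ξ hξ X₁ hX₁
      obtain ⟨η₂, hη₂E, hρη₂, hνη₂⟩ := paste X₂ hX₂ ξ hξ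
      have hS₁ : g₁ ≤ᵐ[μ] ρ η₁ := by
        refine hg₁.1 (ρ η₁) ⟨η₁, hη₁E, ?_, rfl⟩
        filter_upwards [hle, hνη₁] with ω hω h₁
        rw [h₁]
        by_cases h : ω ∈ B
        · simp only [h, if_true]
          simpa [min_eq_left (show ν X₁ ω ≤ ν X₂ ω from h)] using hω
        · simp [h]
      have hS₂ : g₂ ≤ᵐ[μ] ρ η₂ := by
        refine hg₂.1 (ρ η₂) ⟨η₂, hη₂E, ?_, rfl⟩
        filter_upwards [hle, hνη₂] with ω hω h₂
        rw [h₂]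
        by_cases h : ω ∈ B
        · simp [h]
        · simp only [h, if_false]
          have : ν X₂ ω ≤ ν X₁ ω := le_of_not_ge h
          simpa [min_eq_right this] using hω
      filter_upwards [hS₁, hS₂, hρη₁, hρη₂] with ω hg1 hg2 hr1 hr2
      by_cases h : ω ∈ B
      · refine le_trans (min_le_left _ _) (hg1.trans ?_)
        rw [hr1]; simp [h]
      · refine le_trans (min_le_right _ _) (hg2.trans ?_)
        rw [hr2]; simp [h]
    filter_upwards [h1, h2, h3] with ω a b c
    exact le_antisymm c (le_min a b)
  · -- max identity
    have h1 : ∀ᵐ ω ∂μ, max (g₁ ω) (g₂ ω) ≤ gmax ω := by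
      refine hgmax.2 _ ?_
      rintro f ⟨ξ, hξ, hle, rfl⟩
      have a1 : ∀ᵐ ω ∂μ, g₁ ω ≤ ρ ξ ω :=
        hg₁.1 (ρ ξ) ⟨ξ, hξ, hle.mono fun ω h => le_trans (le_max_left _ _) h, rfl⟩
      have a2 : ∀ᵐ ω ∂μ, g₂ ω ≤ ρ ξ ω :=
        hg₂.1 (ρ ξ) ⟨ξ, hξ, hle.mono fun ω h => le_trans (le_max_right _ _) h, rfl⟩
      filter_upwards [a1, a2] with ω h₁ h₂
      exact max_le h₁ h₂
    have h2 : ∀ᵐ ω ∂μ, (if ω ∈ B then gmax ω else (⊥ : EReal)) ≤ g₂ ω := by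
      refine hg₂.2 _ ?_
      rintro f ⟨ξ, hξ, hle, rfl⟩
      obtain ⟨η, hηE, hρη, hνη⟩ := paste ξ hξ X₁ hX₁
      have hmax : ∀ᵐ ω ∂μ, gmax ω ≤ ρ η ω := by
        refine hgmax.1 (ρ η) ⟨η, hηE, ?_, rfl⟩
        filter_upwards [hle, hνη] with ω hω h₁
        rw [h₁]
        by_cases h : ω ∈ B
        · simpa [h, max_eq_right (show ν X₁ ω ≤ ν X₂ ω from h)] using hω
        · have : ν X₂ ω ≤ ν X₁ ω := le_of_not_ge h
          simp [h, max_eq_left this]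
      filter_upwards [hmax, hρη] with ω hω hr
      by_cases h : ω ∈ B
      · simp only [h, if_true]
        refine hω.trans ?_
        rw [hr]; simp [h]
      · simp [h]
    have h3 : ∀ᵐ ω ∂μ, (if ω ∈ B then (⊥ : EReal) else gmax ω) ≤ g₁ ω := by
      refine hg₁.2 _ ?_
      rintro f ⟨ξ, hξ, hle, rfl⟩
      obtain ⟨η, hηE, hρη, hνη⟩ := paste X₂ hX₂ ξ hξ
      have hmax : ∀ᵐ ω ∂μ, gmax ω ≤ ρ η ω := by
        refine hgmax.1 (ρ η) ⟨η, hηE, ?_, rfl⟩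
        filter_upwards [hle, hνη] with ω hω h₁
        rw [h₁]
        by_cases h : ω ∈ B
        · simp [h, max_eq_right (show ν X₁ ω ≤ ν X₂ ω from h)]
        · have : ν X₂ ω ≤ ν X₁ ω := le_of_not_ge h
          simpa [h, max_eq_left this] using hω
      filter_upwards [hmax, hρη] with ω hω hr
      by_cases h : ω ∈ B
      · simp [h]
      · simp only [h, if_false]
        refine hω.trans ?_
        rw [hr]; simp [h]
    filter_upwards [h1, h2, h3] with ω a b c
    refine le_antisymm a ?_
    by_cases h : ω ∈ B
    · simp only [h, if_true] at b
      exact b.trans (le_max_right _ _)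
    · simp only [h, if_false] at c
      exact c.trans (le_max_left _ _)
end

section
/- Let ρ : E → L̄⁰(G) be regular, μ L⁰(G)-linear, R(Y,μ) := ess inf{ρ(ξ) : μ(ξ) ≥ Y}. Then the map X ↦ R(μ(X),μ) is L⁰(G)-quasi-affine: for X₁, X₂ ∈ E and G-measurable Λ with 0 ≤ Λ ≤ 1, R(μ(ΛX₁+(1−Λ)X₂),μ) ≥ R(μ(X₁),μ) ∧ R(μ(X₂),μ) and R(μ(ΛX₁+(1−Λ)X₂),μ) ≤ R(μ(X₁),μ) ∨ R(μ(X₂),μ). -/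
open MeasureTheory Filter Topology
open scoped Classical

/-- For regular `ρ : E → L̄⁰(G)`, `L⁰(G)`-linear `ν` and
`R(Y,ν) = ess inf {ρ(ξ) : ν(ξ) ≥ Y}`, the map `X ↦ R(ν(X),ν)` is
`L⁰(G)`-quasi-affine: for `X₁, X₂ ∈ E` and `G`-measurable `0 ≤ Λ ≤ 1`,
`R(ν(X₁),ν) ∧ R(ν(X₂),ν) ≤ R(ν(ΛX₁+(1−Λ)X₂),ν) ≤ R(ν(X₁),ν) ∨ R(ν(X₂),ν)` a.s. -/
theorem dual_R_quasi_affine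
    {Ω : Type*} {mF : MeasurableSpace Ω} (m : MeasurableSpace Ω) (hm : m ≤ mF)
    (μ : Measure Ω) [IsProbabilityMeasure μ]
    (E : Set (Ω → ℝ)) (ρ : (Ω → ℝ) → Ω → EReal) (ν : (Ω → ℝ) → Ω → ℝ)
    (hρmeas : ∀ ξ ∈ E, Measurable[m] (ρ ξ)) (hνmeas : ∀ ξ ∈ E, Measurable[m] (ν ξ))
    (hreg : ∀ X₁ ∈ E, ∀ X₂ ∈ E, ∀ A : Set Ω, MeasurableSet[m] A →
      (fun ω => if ω ∈ A then X₁ ω else X₂ ω) ∈ E ∧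
      ρ (fun ω => if ω ∈ A then X₁ ω else X₂ ω)
        =ᵐ[μ] fun ω => if ω ∈ A then ρ X₁ ω else ρ X₂ ω)
    (hlin : ∀ α β : Ω → ℝ, Measurable[m] α → Measurable[m] β →
      ∀ X ∈ E, ∀ Y ∈ E,
      (fun ω => α ω * X ω + β ω * Y ω) ∈ E ∧
      ν (fun ω => α ω * X ω + β ω * Y ω)
        =ᵐ[μ] fun ω => α ω * ν X ω + β ω * ν Y ω)
    (X₁ : Ω → ℝ) (hX₁ : X₁ ∈ E) (X₂ : Ω → ℝ) (hX₂ : X₂ ∈ E)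
    (Λ : Ω → ℝ) (hΛ : Measurable[m] Λ) (hΛ0 : ∀ ω, 0 ≤ Λ ω) (hΛ1 : ∀ ω, Λ ω ≤ 1)
    (g₁ g₂ gc : Ω → EReal)
    (hg₁ : IsEssInf μ {f | ∃ ξ ∈ E, (∀ᵐ ω ∂μ, ν X₁ ω ≤ ν ξ ω) ∧ f = ρ ξ} g₁)
    (hg₂ : IsEssInf μ {f | ∃ ξ ∈ E, (∀ᵐ ω ∂μ, ν X₂ ω ≤ ν ξ ω) ∧ f = ρ ξ} g₂)
    (hgc : IsEssInf μ {f | ∃ ξ ∈ E,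
      (∀ᵐ ω ∂μ, ν (fun ω' => Λ ω' * X₁ ω' + (1 - Λ ω') * X₂ ω') ω ≤ ν ξ ω) ∧
      f = ρ ξ} gc) :
    (∀ᵐ ω ∂μ, min (g₁ ω) (g₂ ω) ≤ gc ω) ∧
    (∀ᵐ ω ∂μ, gc ω ≤ max (g₁ ω) (g₂ ω)) := by

  classical
  set A : Set Ω := {ω | ν X₁ ω ≤ ν X₂ ω} with hAdef
  have hA : MeasurableSet[m] A := measurableSet_le (hνmeas _ hX₁) (hνmeas _ hX₂)
  obtain ⟨hXcE, hXcν⟩ := hlin Λ (fun ω => 1 - Λ ω) hΛ (measurable_const.sub hΛ) X₁ hX₁ X₂ hX₂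
  -- gluing helper
  have glue : ∀ ξ ∈ E, ∀ Y ∈ E, ∀ B : Set Ω, MeasurableSet[m] B →
      (fun ω => if ω ∈ B then ξ ω else Y ω) ∈ E ∧
      ρ (fun ω => if ω ∈ B then ξ ω else Y ω)
        =ᵐ[μ] (fun ω => if ω ∈ B then ρ ξ ω else ρ Y ω) ∧
      ν (fun ω => if ω ∈ B then ξ ω else Y ω)
        =ᵐ[μ] (fun ω => if ω ∈ B then ν ξ ω else ν Y ω) := by
    intro ξ hξ Y hY B hB
    obtain ⟨hmem, hρ⟩ := hreg ξ hξ Y hY B hB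
    have hα : Measurable[m] (fun ω => if ω ∈ B then (1:ℝ) else 0) :=
      Measurable.ite hB measurable_const measurable_const
    have hβ : Measurable[m] (fun ω => if ω ∈ B then (0:ℝ) else 1) :=
      Measurable.ite hB measurable_const measurable_const
    obtain ⟨_, hν⟩ := hlin _ _ hα hβ ξ hξ Y hY
    have heq : (fun ω => (if ω ∈ B then (1:ℝ) else 0) * ξ ω + (if ω ∈ B then (0:ℝ) else 1) * Y ω)
        = fun ω => if ω ∈ B then ξ ω else Y ω := by
      funext ω; by_cases h : ω ∈ B <;> simp [h]
    rw [heq] at hν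
    refine ⟨hmem, hρ, hν.trans ?_⟩
    filter_upwards with ω
    by_cases h : ω ∈ B <;> simp [h]
  -- bounds for the convex combination
  have hXcbounds : ∀ᵐ ω ∂μ,
      min (ν X₁ ω) (ν X₂ ω) ≤ ν (fun ω' => Λ ω' * X₁ ω' + (1 - Λ ω') * X₂ ω') ω ∧
      ν (fun ω' => Λ ω' * X₁ ω' + (1 - Λ ω') * X₂ ω') ω ≤ max (ν X₁ ω) (ν X₂ ω) := by
    filter_upwards [hXcν] with ω hω
    rw [hω]
    constructor
    · rcases le_total (ν X₁ ω) (ν X₂ ω) with h | h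
      · rw [min_eq_left h]; nlinarith [hΛ0 ω, hΛ1 ω]
      · rw [min_eq_right h]; nlinarith [hΛ0 ω, hΛ1 ω]
    · rcases le_total (ν X₁ ω) (ν X₂ ω) with h | h
      · rw [max_eq_right h]; nlinarith [hΛ0 ω, hΛ1 ω]
      · rw [max_eq_left h]; nlinarith [hΛ0 ω, hΛ1 ω]
  refine ⟨?_, ?_⟩
  · -- lower bound
    apply hgc.2
    rintro f ⟨ξ, hξE, hξν, rfl⟩
    obtain ⟨hmem1, hρ1, hν1⟩ := glue ξ hξE X₁ hX₁ A hA
    have hS1 : ∀ᵐ ω ∂μ, ν X₁ ω ≤ ν (fun ω => if ω ∈ A then ξ ω else X₁ ω) ω := by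
      filter_upwards [hν1, hξν, hXcbounds] with ω h1 h2 h3
      rw [h1]
      by_cases h : ω ∈ A
      · simp only [if_pos h]
        have hm : min (ν X₁ ω) (ν X₂ ω) = ν X₁ ω := min_eq_left h
        linarith [h3.1]
      · simp [h]
    have hb1 := hg₁.1 _ ⟨_, hmem1, hS1, rfl⟩
    obtain ⟨hmem2, hρ2, hν2⟩ := glue X₂ hX₂ ξ hξE A hA
    have hS2 : ∀ᵐ ω ∂μ, ν X₂ ω ≤ ν (fun ω => if ω ∈ A then X₂ ω else ξ ω) ω := by
      filter_upwards [hν2, hξν, hXcbounds] with ω h1 h2 h3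
      rw [h1]
      by_cases h : ω ∈ A
      · simp [h]
      · simp only [if_neg h]
        have hba : ν X₂ ω ≤ ν X₁ ω := le_of_not_ge h
        have hm : min (ν X₁ ω) (ν X₂ ω) = ν X₂ ω := min_eq_right hba
        linarith [h3.1]
    have hb2 := hg₂.1 _ ⟨_, hmem2, hS2, rfl⟩
    filter_upwards [hb1, hb2, hρ1, hρ2] with ω h1 h2 hr1 hr2
    by_cases h : ω ∈ A
    · calc min (g₁ ω) (g₂ ω) ≤ g₁ ω := min_le_left _ _
        _ ≤ _ := h1
        _ = ρ ξ ω := by rw [hr1]; simp [h]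
    · calc min (g₁ ω) (g₂ ω) ≤ g₂ ω := min_le_right _ _
        _ ≤ _ := h2
        _ = ρ ξ ω := by rw [hr2]; simp [h]
  · -- upper bound
    have honA : ∀ᵐ ω ∂μ, ω ∈ A → gc ω ≤ g₂ ω := by
      have h2 : ∀ᵐ ω ∂μ, (fun ω => if ω ∈ A then gc ω else (⊥ : EReal)) ω ≤ g₂ ω := by
        apply hg₂.2
        rintro f ⟨ξ, hξE, hξν, rfl⟩
        obtain ⟨hmem, hρg, hνg⟩ := glue ξ hξE X₁ hX₁ A hA
        have hSc : ∀ᵐ ω ∂μ, ν (fun ω' => Λ ω' * X₁ ω' + (1 - Λ ω') * X₂ ω') ω ≤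
            ν (fun ω => if ω ∈ A then ξ ω else X₁ ω) ω := by
          filter_upwards [hνg, hξν, hXcbounds] with ω h1 h2 h3
          rw [h1]
          by_cases h : ω ∈ A
          · simp only [if_pos h]
            have hm : max (ν X₁ ω) (ν X₂ ω) = ν X₂ ω := max_eq_right h
            linarith [h3.2]
          · simp only [if_neg h]
            have hba : ν X₂ ω ≤ ν X₁ ω := le_of_not_ge h
            have hm : max (ν X₁ ω) (ν X₂ ω) = ν X₁ ω := max_eq_left hba
            linarith [h3.2]
        have hb := hgc.1 _ ⟨_, hmem, hSc, rfl⟩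
        filter_upwards [hb, hρg] with ω hb hρg
        by_cases h : ω ∈ A
        · simp only [if_pos h]
          calc gc ω ≤ _ := hb
            _ = ρ ξ ω := by rw [hρg]; simp [h]
        · simp [h]
      filter_upwards [h2] with ω h2 hmem
      simpa [hmem] using h2
    have honAc : ∀ᵐ ω ∂μ, ω ∉ A → gc ω ≤ g₁ ω := by
      have h2 : ∀ᵐ ω ∂μ, (fun ω => if ω ∈ A then (⊥ : EReal) else gc ω) ω ≤ g₁ ω := by
        apply hg₁.2
        rintro f ⟨ξ, hξE, hξν, rfl⟩
        obtain ⟨hmem, hρg, hνg⟩ := glue X₂ hX₂ ξ hξE A hA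
        have hSc : ∀ᵐ ω ∂μ, ν (fun ω' => Λ ω' * X₁ ω' + (1 - Λ ω') * X₂ ω') ω ≤
            ν (fun ω => if ω ∈ A then X₂ ω else ξ ω) ω := by
          filter_upwards [hνg, hξν, hXcbounds] with ω h1 h2 h3
          rw [h1]
          by_cases h : ω ∈ A
          · simp only [if_pos h]
            have hm : max (ν X₁ ω) (ν X₂ ω) = ν X₂ ω := max_eq_right h
            linarith [h3.2]
          · simp only [if_neg h]
            have hba : ν X₂ ω ≤ ν X₁ ω := le_of_not_ge h
            have hm : max (ν X₁ ω) (ν X₂ ω) = ν X₁ ω := max_eq_left hba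
            linarith [h3.2]
        have hb := hgc.1 _ ⟨_, hmem, hSc, rfl⟩
        filter_upwards [hb, hρg] with ω hb hρg
        by_cases h : ω ∈ A
        · simp [h]
        · simp only [if_neg h]
          calc gc ω ≤ _ := hb
            _ = ρ ξ ω := by rw [hρg]; simp [h]
      filter_upwards [h2] with ω h2 hmem
      simpa [hmem] using h2
    filter_upwards [honA, honAc] with ω h1 h2
    by_cases h : ω ∈ A
    · exact (h1 h).trans (le_max_right _ _)
    · exact (h2 h).trans (le_max_left _ _)
end

section
/- Let ρ : E → L̄⁰(G) be monotone decreasing, regular, and cash additive (ρ(X+Λ) = ρ(X) − Λ for every Λ ∈ L⁰(G)). For Q with density Z = dQ/dP ≥ 0, E[Z|G]=1, define ρ*(−Q) := ess sup_{ξ ∈ E} { E_Q[−ξ|G] − ρ(ξ) } and R(Y,Q) := ess inf{ ρ(ξ) : E_Q[−ξ|G] = Y }. Then R(E_Q[−X|G], Q) = E_Q[−X|G] − ρ*(−Q) for every X ∈ E. -/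
open MeasureTheory Filter Topology
open scoped Classical

/-- Essential supremum of a family of extended-real random variables. -/
def IsEssSup {Ω : Type*} [MeasurableSpace Ω] (μ : MeasureTheory.Measure Ω)
    (S : Set (Ω → EReal)) (s : Ω → EReal) : Prop :=
  (∀ f ∈ S, ∀ᵐ ω ∂μ, f ω ≤ s ω) ∧
  ∀ h : Ω → EReal, (∀ f ∈ S, ∀ᵐ ω ∂μ, f ω ≤ h ω) → ∀ᵐ ω ∂μ, s ω ≤ h ω


set_option linter.unnecessarySeqFocus false in
private lemma ereal_aux1 (a : ℝ) (b s : EReal) (h : (a:EReal) - b ≤ s) :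
    (a:EReal) - s ≤ b := by
  induction b <;> induction s <;>
    simp_all [sub_eq_add_neg] <;> norm_cast <;> norm_cast at h <;> linarith

set_option linter.unnecessarySeqFocus false in
private lemma ereal_aux2 (a y : ℝ) (b g : EReal) (h : g ≤ b - ((a - y : ℝ):EReal)) :
    (a:EReal) - b ≤ (y:EReal) - g := by
  induction b <;> induction g <;>
    simp_all [sub_eq_add_neg] <;> norm_cast <;> norm_cast at h <;>
    first | linarith | exact absurd h (EReal.coe_ne_top _)

set_option linter.unnecessarySeqFocus false in
private lemma ereal_aux3 (y : ℝ) (g s : EReal) (h1 : (y:EReal) - s ≤ g)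
    (h2 : s ≤ (y:EReal) - g) : g = (y:EReal) - s := by
  induction g <;> induction s <;>
    simp_all [sub_eq_add_neg] <;> norm_cast <;>
    (try norm_cast at h1) <;> (try norm_cast at h2) <;>
    first | linarith | exact absurd h2 (EReal.coe_ne_top _)

/-- Let `ρ : E → L̄⁰(G)` be monotone decreasing, regular and cash
additive (`ρ(X+Λ) = ρ(X) − Λ` for `Λ ∈ L⁰(G)`), and `Q` with density `Z ≥ 0`,
`E[Z|G] = 1`. With `ρ*(−Q) := ess sup_ξ {E_Q[−ξ|G] − ρ(ξ)}` and
`R(Y,Q) := ess inf {ρ(ξ) : E_Q[−ξ|G] = Y}`, one has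
`R(E_Q[−X|G], Q) = E_Q[−X|G] − ρ*(−Q)` a.s. for every `X ∈ E`. -/
theorem dual_R_cash_additive
    {Ω : Type*} (m : MeasurableSpace Ω) {mF : MeasurableSpace Ω} (hm : m ≤ mF)
    (μ : Measure Ω) [IsProbabilityMeasure μ]
    (Z : Ω → ℝ) (hZmeas : Measurable Z) (hZ0 : 0 ≤ Z)
    (hZ1 : μ[Z|m] =ᵐ[μ] fun _ => (1 : ℝ))
    (E : Set (Ω → ℝ)) (ρ : (Ω → ℝ) → Ω → EReal)
    (hρmeas : ∀ ξ ∈ E, Measurable[m] (ρ ξ))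
    (hint : ∀ ξ ∈ E, Integrable (fun ω => ξ ω * Z ω) μ)
    -- `ρ` is regular
    (hreg : ∀ X₁ ∈ E, ∀ X₂ ∈ E, ∀ A : Set Ω, MeasurableSet[m] A →
      (fun ω => if ω ∈ A then X₁ ω else X₂ ω) ∈ E ∧
      ρ (fun ω => if ω ∈ A then X₁ ω else X₂ ω)
        =ᵐ[μ] fun ω => if ω ∈ A then ρ X₁ ω else ρ X₂ ω)
    -- `ρ` is monotone decreasing
    (hmon : ∀ X₁ ∈ E, ∀ X₂ ∈ E, (∀ᵐ ω ∂μ, X₂ ω ≤ X₁ ω) →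
      ∀ᵐ ω ∂μ, ρ X₁ ω ≤ ρ X₂ ω)
    -- `ρ` is cash additive (and `E` is closed under `L⁰(G)`-translations)
    (hCAS : ∀ ξ ∈ E, ∀ Λ : Ω → ℝ, Measurable[m] Λ →
      (fun ω => ξ ω + Λ ω) ∈ E ∧
      ρ (fun ω => ξ ω + Λ ω) =ᵐ[μ] fun ω => ρ ξ ω - (Λ ω : EReal))
    (X : Ω → ℝ) (hX : X ∈ E)
    (g s : Ω → EReal)
    -- `g = R(E_Q[−X|G], Q)`
    (hg : IsEssInf μ {f | ∃ ξ ∈ E,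
      ((μ[fun ω' => -(ξ ω') * Z ω'|m]) =ᵐ[μ] (μ[fun ω' => -(X ω') * Z ω'|m])) ∧
      f = ρ ξ} g)
    -- `s = ρ*(−Q)`
    (hs : IsEssSup μ {f | ∃ ξ ∈ E,
      f = fun ω => ((μ[fun ω' => -(ξ ω') * Z ω'|m]) ω : EReal) - ρ ξ ω} s) :
    ∀ᵐ ω ∂μ, g ω = ((μ[fun ω' => -(X ω') * Z ω'|m]) ω : EReal) - s ω := by

  set Y : Ω → ℝ := μ[fun ω' => -(X ω') * Z ω'|m] with hYdef
  -- Z is integrable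
  have hZint : Integrable Z μ := by
    by_contra hni
    rw [condExp_of_not_integrable hni] at hZ1
    obtain ⟨ω, hω⟩ := hZ1.exists
    simp at hω
  -- Step A : Y - s is a lower bound for the family defining g
  have hlow : ∀ᵐ ω ∂μ, (Y ω : EReal) - s ω ≤ g ω := by
    refine hg.2 _ ?_
    rintro f ⟨ξ, hξ, hc, rfl⟩
    have hmem : (fun ω => ((μ[fun ω' => -(ξ ω') * Z ω'|m]) ω : EReal) - ρ ξ ω) ∈
        {f | ∃ ξ ∈ E, f = fun ω => ((μ[fun ω' => -(ξ ω') * Z ω'|m]) ω : EReal) - ρ ξ ω} :=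
      ⟨ξ, hξ, rfl⟩
    filter_upwards [hs.1 _ hmem, hc] with ω h1 h2
    rw [h2] at h1
    exact ereal_aux1 _ _ _ h1
  -- Step B : Y - g is an upper bound for the family defining s
  have hupp : ∀ᵐ ω ∂μ, s ω ≤ (Y ω : EReal) - g ω := by
    refine hs.2 _ ?_
    rintro f ⟨ξ, hξ, rfl⟩
    set a : Ω → ℝ := μ[fun ω' => -(ξ ω') * Z ω'|m] with hadef
    set Λ : Ω → ℝ := fun ω => a ω - Y ω with hΛdef
    have hΛsm : StronglyMeasurable[m] Λ :=
      stronglyMeasurable_condExp.sub stronglyMeasurable_condExp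
    obtain ⟨hξ'E, hρξ'⟩ := hCAS ξ hξ Λ hΛsm.measurable
    have hIξZ : Integrable (fun ω => -(ξ ω) * Z ω) μ :=
      (hint ξ hξ).neg.congr (Filter.Eventually.of_forall fun ω => by simp only [Pi.neg_apply]; ring)
    have hIΛZ : Integrable (fun ω => Λ ω * Z ω) μ := by
      have h2 := ((hint _ hξ'E).sub (hint ξ hξ))
      exact h2.congr (Filter.Eventually.of_forall fun ω => by
        simp only [Pi.sub_apply]; ring)
    -- pull-out property
    have hpull : μ[fun ω => Λ ω * Z ω|m] =ᵐ[μ] Λ := by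
      have h1 := condExp_mul_of_stronglyMeasurable_left hΛsm (f := Λ) (g := Z) hIΛZ hZint
      filter_upwards [h1, hZ1] with ω h1 h2
      exact (by simpa [h2] using h1 : (μ[Λ * Z|m]) ω = Λ ω)
    -- conditional expectation of the shifted variable
    have hcond' : (μ[fun ω' => -((fun ω => ξ ω + Λ ω) ω') * Z ω'|m]) =ᵐ[μ] Y := by
      have heq : (fun ω' => -((fun ω => ξ ω + Λ ω) ω') * Z ω') =
          (fun ω' => -(ξ ω') * Z ω' - Λ ω' * Z ω') := by
        funext ω'; ring
      rw [heq]
      have h1 := condExp_sub (μ := μ) (m := m) hIξZ hIΛZ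
      filter_upwards [h1, hpull] with ω h1 h2
      have : (μ[fun ω' => -(ξ ω') * Z ω' - Λ ω' * Z ω'|m]) ω
          = a ω - (μ[fun ω => Λ ω * Z ω|m]) ω := h1
      rw [this, h2]
      simp [hΛdef]
    have hmem : ρ (fun ω => ξ ω + Λ ω) ∈ {f | ∃ ξ ∈ E,
        ((μ[fun ω' => -(ξ ω') * Z ω'|m]) =ᵐ[μ] (μ[fun ω' => -(X ω') * Z ω'|m])) ∧
        f = ρ ξ} := ⟨_, hξ'E, hcond', rfl⟩
    filter_upwards [hg.1 _ hmem, hρξ'] with ω h1 h2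
    rw [h2] at h1
    exact ereal_aux2 (a ω) (Y ω) (ρ ξ ω) (g ω) h1
  filter_upwards [hlow, hupp] with ω h1 h2
  exact ereal_aux3 (Y ω) (g ω) (s ω) h1 h2
end
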